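/- Conservation of the Laplace–Runge–Lenz (eccentricity) vector: if r'' = −μ r/‖r‖³, then e(t) = (r'(t) × (r(t) × r'(t)))/μ − r(t)/‖r(t)‖ is constant along the motion. -/

import Mathlib

/-!
Along a Kepler orbit the force is central, so the angular momentum `L = r × r'` is conserved.
Hence `(r' × L)' = r'' × L = -(μ / ‖r‖³) r × (r × r')`, and expanding the triple product turns
this into `μ` times the derivative `r' / ‖r‖ - (⟪r, r'⟫ / ‖r‖³) r` of the unit vector `r / ‖r‖`.
-/

open scoped RealInnerProductSpace Matrix

/-- The cross product in `EuclideanSpace ℝ (Fin 3)`. -/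
noncomputable def cross3 (u v : EuclideanSpace ℝ (Fin 3)) : EuclideanSpace ℝ (Fin 3) :=
  (WithLp.equiv 2 (Fin 3 → ℝ)).symm
    ![u 1 * v 2 - u 2 * v 1, u 2 * v 0 - u 0 * v 2, u 0 * v 1 - u 1 * v 0]

local notation "ℝ³" => EuclideanSpace ℝ (Fin 3)

theorem cross3_eq_crossProduct (u v : ℝ³) : cross3 u v = WithLp.toLp 2 (u.ofLp ⨯₃ v.ofLp) := by
  ext i; fin_cases i <;> simp [cross3, cross_apply]

theorem cross3_self (u : ℝ³) : cross3 u u = 0 := by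
  simp [cross3_eq_crossProduct]

theorem cross3_zero_right (u : ℝ³) : cross3 u 0 = 0 := by
  simp [cross3_eq_crossProduct]

theorem cross3_smul_right (c : ℝ) (u v : ℝ³) : cross3 u (c • v) = c • cross3 u v := by
  simp [cross3_eq_crossProduct]

theorem cross3_smul_left (c : ℝ) (u v : ℝ³) : cross3 (c • u) v = c • cross3 u v := by
  simp [cross3_eq_crossProduct]

theorem cross3_cross3_self (u v : ℝ³) : cross3 u (cross3 u v) = ⟪u, v⟫ • u - ‖u‖ ^ 2 • v := by
  rw [cross3_eq_crossProduct, cross3_eq_crossProduct, ← real_inner_self_eq_norm_sq,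
    EuclideanSpace.inner_eq_star_dotProduct, EuclideanSpace.inner_eq_star_dotProduct]
  simp only [star_trivial, cross_cross_eq_smul_sub_smul', dotProduct_comm]
  rfl

noncomputable def cross3L : ℝ³ →L[ℝ] ℝ³ →L[ℝ] ℝ³ :=
  let e := WithLp.linearEquiv 2 ℝ (Fin 3 → ℝ)
  ((crossProduct.compl₁₂ e.toLinearMap e.toLinearMap).compr₂ e.symm.toLinearMap)
    |>.toContinuousBilinearMap

theorem cross3L_apply (u v : ℝ³) : cross3L u v = cross3 u v := by
  simp [cross3L, cross3_eq_crossProduct]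

theorem HasDerivAt.cross3 {u v : ℝ → ℝ³} {u' v' : ℝ³} {t : ℝ}
    (hu : HasDerivAt u u' t) (hv : HasDerivAt v v' t) :
    HasDerivAt (fun s => cross3 (u s) (v s)) (cross3 u' (v t) + cross3 (u t) v') t := by
  simpa only [cross3L_apply, add_comm] using
    cross3L.hasDerivAt_of_bilinear (fun _ => hu) (fun _ => hv)

section InnerProductSpace

variable {F : Type*} [NormedAddCommGroup F] [InnerProductSpace ℝ F] {f : ℝ → F} {f' : F} {x : ℝ}

theorem HasDerivAt.norm (hf : HasDerivAt f f' x) (h0 : f x ≠ 0) :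
    HasDerivAt (fun y => ‖f y‖) (⟪f x, f'⟫ / ‖f x‖) x := by
  have hsq : ‖f x‖ ^ 2 ≠ 0 := by positivity
  convert hf.norm_sq.sqrt hsq using 1
  · simp only [Real.sqrt_sq (norm_nonneg _)]
  · rw [Real.sqrt_sq (norm_nonneg _)]
    ring

theorem HasDerivAt.inv_norm_smul (hf : HasDerivAt f f' x) (h0 : f x ≠ 0) :
    HasDerivAt (fun y => ‖f y‖⁻¹ • f y) (‖f x‖⁻¹ • f' - (⟪f x, f'⟫ / ‖f x‖ ^ 3) • f x) x := by
  have hn : ‖f x‖ ≠ 0 := norm_ne_zero_iff.mpr h0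
  refine (((hf.norm h0).inv hn).smul hf).congr_deriv ?_
  rw [sub_eq_add_neg, ← neg_smul]
  congr 2
  field_simp

end InnerProductSpace

theorem hasDerivAt_cross3_of_central {r v : ℝ → ℝ³} {k t : ℝ}
    (hr : HasDerivAt r (v t) t) (hv : HasDerivAt v (k • r t) t) :
    HasDerivAt (fun s => cross3 (r s) (v s)) 0 t := by
  simpa [cross3_self, cross3_smul_right] using hr.cross3 hv

noncomputable def laplaceRungeLenz (μ : ℝ) (r v : ℝ³) : ℝ³ :=
  μ⁻¹ • cross3 v (cross3 r v) - ‖r‖⁻¹ • r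

theorem hasDerivAt_laplaceRungeLenz {μ t : ℝ} {r v : ℝ → ℝ³} (hμ : μ ≠ 0) (h0 : r t ≠ 0)
    (hr : HasDerivAt r (v t) t) (hv : HasDerivAt v (-(μ / ‖r t‖ ^ 3) • r t) t) :
    HasDerivAt (fun s => laplaceRungeLenz μ (r s) (v s)) 0 t := by
  have hL := hasDerivAt_cross3_of_central hr hv
  have h := ((hv.cross3 hL).const_smul μ⁻¹).sub (hr.inv_norm_smul h0)
  refine h.congr_deriv ?_
  have hn : ‖r t‖ ≠ 0 := norm_ne_zero_iff.mpr h0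
  rw [cross3_zero_right, add_zero, cross3_smul_left, cross3_cross3_self]
  match_scalars <;> field_simp <;> ring

theorem kepler_LRL_conservation (μ : ℝ) (hμ : 0 < μ)
    (r : ℝ → EuclideanSpace ℝ (Fin 3))
    (hr : Differentiable ℝ r) (hr' : Differentiable ℝ (deriv r))
    (hne : ∀ t, r t ≠ 0)
    (heom : ∀ t, deriv (deriv r) t = -(μ / ‖r t‖ ^ 3) • r t) :
    ∀ t₁ t₂ : ℝ,
      μ⁻¹ • cross3 (deriv r t₁) (cross3 (r t₁) (deriv r t₁)) - ‖r t₁‖⁻¹ • r t₁ =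
      μ⁻¹ • cross3 (deriv r t₂) (cross3 (r t₂) (deriv r t₂)) - ‖r t₂‖⁻¹ • r t₂ := by
  have hLRL (t : ℝ) : HasDerivAt (fun s => laplaceRungeLenz μ (r s) (deriv r s)) 0 t :=
    hasDerivAt_laplaceRungeLenz hμ.ne' (hne t) (hr t).hasDerivAt (heom t ▸ (hr' t).hasDerivAt)
  exact is_const_of_deriv_eq_zero (fun t => (hLRL t).differentiableAt) (fun t => (hLRL t).deriv)
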